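/- arXiv:2104.05141 — 3 statements merged into one kernel-verified Lean document; each statement's English description precedes it below -/
import Mathlib

section
/- Let Γ be a finitely generated self-simulable group with decidable word problem. Then the sunny-side up subshift X_{≤1} = {x ∈ {0,1}^Γ : if x(g) = x(h) = 1 then g = h} is a sofic Γ-subshift. -/
open scoped Pointwise

namespace SelfSim

/-- The left shift action of a group `G` on the full shift `G → A`:
`(g · x)(h) = x (g⁻¹ h)`. -/
def shift {G A : Type*} [Group G] (g : G) (x : G → A) : G → A := fun h => x (g⁻¹ * h)

/-- A `G`-subshift: a closed, shift-invariant subset of the full shift `G → A`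
(`A` carrying its topology, `G → A` the product topology). -/
def IsSubshift {G A : Type*} [Group G] [TopologicalSpace A] (X : Set (G → A)) : Prop :=
  IsClosed X ∧ ∀ (g : G) (x : G → A), x ∈ X → shift g x ∈ X

/-- A subshift of finite type: there are a finite set `F ⊆ G` and a set `𝓛` of patterns
on `F` such that `x ∈ X` iff every translate of `x` restricted to `F` lies in `𝓛`. -/
def IsSFT {G A : Type*} [Group G] (X : Set (G → A)) : Prop :=
  ∃ (F : Finset G) (L : Set (↥F → A)),
    ∀ x : G → A, x ∈ X ↔ ∀ g : G, (fun h : ↥F => x (g * (h : G))) ∈ L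

/-- `φ` is a topological factor map from the shift action on `Z ⊆ G → A` onto the
action `act` of `G` on `Y ⊆ β`: continuous on `Z`, mapping `Z` into and onto `Y`,
and equivariant. -/
def IsFactorMapOnto {G A β : Type*} [Group G] [TopologicalSpace A] [TopologicalSpace β]
    (Z : Set (G → A)) (φ : (G → A) → β) (act : G → β → β) (Y : Set β) : Prop :=
  ContinuousOn φ Z ∧ Set.MapsTo φ Z Y ∧ Set.SurjOn φ Z Y ∧
    ∀ (g : G) (x : G → A), x ∈ Z → φ (shift g x) = act g (φ x)

/-- A sofic subshift: a topological factor of some subshift of finite type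
(over some finite alphabet, which we may take to be `Fin k`). -/
def IsSofic {G A : Type*} [Group G] [TopologicalSpace A] (Y : Set (G → A)) : Prop :=
  ∃ (k : ℕ) (Z : Set (G → Fin k)) (φ : (G → Fin k) → (G → A)),
    IsSFT Z ∧ IsFactorMapOnto Z φ shift Y

/-- Recursively enumerable predicate. -/
def RE {α : Type*} [Primcodable α] (p : α → Prop) : Prop :=
  Partrec fun a => Part.assert (p a) fun _ => Part.some ()

/-- `x : ℕ → A` begins with the finite word `w`. -/
def ExtendsWord {A : Type*} (x : ℕ → A) (w : List A) : Prop :=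
  ∀ i : Fin w.length, x i = w.get i

/-- A closed subset `Z ⊆ A^ℕ` is effectively closed if the set of words whose
cylinder is disjoint from `Z` is recursively enumerable. -/
def EffectivelyClosedSet {A : Type*} [Primcodable A] [TopologicalSpace A]
    (Z : Set (ℕ → A)) : Prop :=
  IsClosed Z ∧ RE fun w : List A => ∀ x : ℕ → A, ExtendsWord x w → x ∉ Z

/-- `act` defines an action of `G` on the set `X ⊆ β`. -/
def IsActionOn {G β : Type*} [Group G] (act : G → β → β) (X : Set β) : Prop :=
  (∀ g : G, Set.MapsTo (act g) X X) ∧ (∀ x ∈ X, act 1 x = x) ∧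
    ∀ (g h : G) (x : β), x ∈ X → act (g * h) x = act g (act h x)

/-- The set representation of the action `act` of `G` on `X ⊆ A^ℕ` with respect to the
finite generating tuple `s : Fin m → G` (playing the role of the generating set `S`):
the set of `y ∈ (A^S)^ℕ` of the form `y(n)(s) = (s · x)(n)` for some `x ∈ X`. -/
def SetRep {G A : Type*} [Group G] {m : ℕ} (s : Fin m → G)
    (act : G → (ℕ → A) → ℕ → A) (X : Set (ℕ → A)) : Set (ℕ → (Fin m → A)) :=
  {y | ∃ x ∈ X, ∀ i : Fin m, (fun n => y n i) = act (s i) x}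

/-- The action `act` of `G` on the closed set `X ⊆ A^ℕ` is effectively closed with respect
to the finite generating tuple `s` (which contains `1` and generates `G` as a monoid):
its set representation is an effectively closed subset of `(A^S)^ℕ`. -/
def IsEffClosedActionWith {G A : Type*} [Group G] [Primcodable A] [TopologicalSpace A]
    {m : ℕ} (s : Fin m → G) (act : G → (ℕ → A) → ℕ → A) (X : Set (ℕ → A)) : Prop :=
  IsClosed X ∧ IsActionOn act X ∧ (∃ i, s i = 1) ∧
    Submonoid.closure (Set.range s) = ⊤ ∧
    EffectivelyClosedSet (SetRep s act X)

/-- The action `act` of `G` on `X ⊆ A^ℕ` is effectively closed (with respect to some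
finite generating set containing `1`). -/
def IsEffClosedAction {G A : Type*} [Group G] [Primcodable A] [TopologicalSpace A]
    (act : G → (ℕ → A) → ℕ → A) (X : Set (ℕ → A)) : Prop :=
  ∃ (m : ℕ) (s : Fin m → G), IsEffClosedActionWith s act X

/-- The action `act` of `G` on `X ⊆ A^ℕ` is a topological factor of some `G`-subshift
of finite type. -/
def IsFactorOfSFT {G A : Type*} [Group G] [TopologicalSpace A]
    (act : G → (ℕ → A) → ℕ → A) (X : Set (ℕ → A)) : Prop :=
  ∃ (k : ℕ) (Z : Set (G → Fin k)) (φ : (G → Fin k) → (ℕ → A)),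
    IsSFT Z ∧ IsFactorMapOnto Z φ act X

/-- A group `G` is (dynamically) self-simulable if every effectively closed action of `G`
on a closed subset of `{0,1}^ℕ` is a topological factor of a `G`-subshift of finite type. -/
def SelfSimulable (G : Type*) [Group G] : Prop :=
  ∀ (X : Set (ℕ → Bool)) (act : G → (ℕ → Bool) → ℕ → Bool),
    IsEffClosedAction act X → IsFactorOfSFT act X

/-- Amenability via the Følner condition: for every finite `K` and `δ > 0` there is a
nonempty finite `F` with `|KF △ F| ≤ δ |F|`. -/
def Amenable (G : Type*) [Group G] : Prop :=
  ∀ K : Set G, K.Finite → ∀ δ : ℝ, 0 < δ →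
    ∃ F : Set G, F.Finite ∧ F.Nonempty ∧
      ((symmDiff (K * F) F).ncard : ℝ) ≤ δ * F.ncard

/-- A finitely generated group is recursively presented: for some finite tuple generating
`G` as a monoid, the set of words evaluating to the identity is recursively enumerable. -/
def RecursivelyPresented (G : Type*) [Group G] : Prop :=
  ∃ (m : ℕ) (s : Fin m → G), Submonoid.closure (Set.range s) = ⊤ ∧
    RE fun w : List (Fin m) => (w.map s).prod = 1

/-- A finitely generated group has decidable word problem: for some finite tuple generating
`G` as a monoid, the set of words evaluating to the identity is decidable. -/
def DecidableWordProblem (G : Type*) [Group G] : Prop :=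
  ∃ (m : ℕ) (s : Fin m → G), Submonoid.closure (Set.range s) = ⊤ ∧
    ComputablePred fun w : List (Fin m) => (w.map s).prod = 1

/-- A pattern coding `c` (a finite list of pairs (word over the generators, letter))
holds in the configuration `x` at position `g`: `x (g ⬝ w̲) = a` for every pair `(w, a)`
of `c`. This says exactly that `x ∈ g·[c]`. -/
def PCHolds {G A : Type*} [Group G] {m : ℕ} (s : Fin m → G) (x : G → A) (g : G)
    (c : List (List (Fin m) × A)) : Prop :=
  ∀ p ∈ c, x (g * (p.1.map s).prod) = p.2

/-- A `G`-subshift `X ⊆ A^G` is effectively closed by patterns: for some finite generating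
tuple `s`, there is a recursively enumerable set `𝒞` of pattern codings such that `X` is the
set of configurations avoiding every translate of every cylinder `[c]`, `c ∈ 𝒞`. -/
def EffClosedByPatterns {G A : Type*} [Group G] [Primcodable A] (X : Set (G → A)) : Prop :=
  ∃ (m : ℕ) (s : Fin m → G), Submonoid.closure (Set.range s) = ⊤ ∧
    ∃ 𝒞 : Set (List (List (Fin m) × A)), RE (· ∈ 𝒞) ∧
      X = {x : G → A | ∀ (g : G) (c : List (List (Fin m) × A)), c ∈ 𝒞 → ¬ PCHolds s x g c}

/-- Word metric distance associated to a finite tuple `s` generating `G` as a monoid. -/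
noncomputable def wordDist {G : Type*} [Group G] {m : ℕ} (s : Fin m → G) (g h : G) : ℕ :=
  sInf {n : ℕ | ∃ w : List (Fin m), w.length = n ∧ (w.map s).prod = g⁻¹ * h}

/-- Two finitely generated groups are quasi-isometric (with respect to word metrics given
by some finite generating sets). -/
def QuasiIsometric (G₁ G₂ : Type*) [Group G₁] [Group G₂] : Prop :=
  ∃ (m₁ : ℕ) (s₁ : Fin m₁ → G₁) (m₂ : ℕ) (s₂ : Fin m₂ → G₂),
    Submonoid.closure (Set.range s₁) = ⊤ ∧ Submonoid.closure (Set.range s₂) = ⊤ ∧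
    ∃ (f : G₂ → G₁) (A B C : ℝ), 1 ≤ A ∧ 0 ≤ B ∧ 0 ≤ C ∧
      (∀ x y : G₂,
        (1 / A) * (wordDist s₂ x y : ℝ) - B ≤ (wordDist s₁ (f x) (f y) : ℝ) ∧
        (wordDist s₁ (f x) (f y) : ℝ) ≤ A * (wordDist s₂ x y : ℝ) + B) ∧
      ∀ z : G₁, ∃ x : G₂, (wordDist s₁ z (f x) : ℝ) ≤ C

/-- A finitely presented group: a quotient of a finitely generated free group by the
normal closure of finitely many relators. -/
def FinitelyPresentedGroup (G : Type*) [Group G] : Prop :=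
  ∃ (m : ℕ) (f : FreeGroup (Fin m) →* G) (R : Finset (FreeGroup (Fin m))),
    Function.Surjective f ∧ f.ker = Subgroup.normalClosure (R : Set (FreeGroup (Fin m)))

/-- A subgroup `Δ ≤ G` is mediated: there is a finite generating set `T` of `G` such that
`Δ ∩ tΔt⁻¹` is non-amenable for every `t ∈ T`. -/
def Mediated {G : Type*} [Group G] (Δ : Subgroup G) : Prop :=
  ∃ T : Finset G, Subgroup.closure (T : Set G) = ⊤ ∧
    ∀ t ∈ T, ¬ Amenable ↥(Δ ⊓ Subgroup.map (MulAut.conj t).toMonoidHom Δ)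

end SelfSim

/-
Enumerate `G` by the codes of words over a finite generating tuple, `e : ℕ → G`, and pull
the shift back along `x ↦ x ∘ e` to an action of `G` on a closed subset of `{0,1}^ℕ`. A finite
word of its set representation prescribes finitely many values `x g`, and it is forbidden for the
sunny-side up subshift exactly when two prescriptions clash: one element with two values, or two
distinct elements both with value `1`. The word problem decides whether two prescribed elements
coincide, so clashes can be searched for and the action is effectively closed. Self-simulability
makes it a factor of an SFT, and composing the factor map with `y ↦ y ∘ e⁻¹` exhibits the
subshift as sofic.
-/

namespace SelfSim

open Function Encodable

section Shift

variable {G A : Type*} [Group G]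

@[simp]
theorem shift_one (x : G → A) : shift 1 x = x := by
  funext h
  simp [shift]

theorem shift_mul (g h : G) (x : G → A) : shift (g * h) x = shift g (shift h x) := by
  funext k
  simp [shift, mul_assoc]

end Shift

theorem comp_comp_invFun {α β γ : Type*} [Nonempty α] {e : α → β} (he : Surjective e)
    (x : β → γ) : (x ∘ e) ∘ invFun e = x := by
  rw [comp_assoc, (rightInverse_invFun he).comp_eq_id, comp_id]

theorem ComputablePred.rePred_exists {α β : Type*} [Primcodable α] [Primcodable β]
    {p : α → β → Prop} (hp : ComputablePred fun q : α × β => p q.1 q.2) :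
    REPred fun a => ∃ b, p a b := by
  classical
  have hsearch : Computable₂ fun (a : α) (n : ℕ) =>
      ((decode n : Option β).map fun b => decide (p a b)).getD false :=
    Computable.option_getD (Computable.option_map (Computable.decode.comp Computable.snd)
      (hp.decide.comp ((Computable.fst.comp Computable.fst).pair Computable.snd)).to₂)
      (Computable.const false)
  refine (Partrec.rfind hsearch.partrec₂).dom_re.of_eq fun a => ?_
  simp only [Nat.rfind_dom, PFun.coe_val, Part.mem_some_iff, Part.some_dom, implies_true, and_true]
  constructor
  · rintro ⟨n, hn⟩
    cases hb : (decode n : Option β) with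
    | none => simp [hb] at hn
    | some b => exact ⟨b, by simpa [hb] using hn⟩
  · rintro ⟨b, hb⟩
    exact ⟨encode b, by simpa using hb⟩

def sunnySideUp (α : Type*) : Set (α → Bool) :=
  {x | ∀ a b, x a = true → x b = true → a = b}

theorem isSubshift_sunnySideUp (G : Type*) [Group G] : IsSubshift (sunnySideUp G) := by
  refine ⟨?_, fun g x hx a b ha hb => mul_left_cancel (hx _ _ ha hb)⟩
  have hopen (a : G) : IsOpen {x : G → Bool | x a = true} :=
    (isOpen_discrete {true}).preimage (continuous_apply a : Continuous fun x : G → Bool => x a)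
  simp only [sunnySideUp, Set.ofPred_forall]
  exact isClosed_iInter fun a => isClosed_iInter fun b =>
    isClosed_imp (hopen a) (isClosed_imp (hopen b) isClosed_const)

theorem exists_mem_sunnySideUp_iff {α ι : Type*} (S : Set ι) (c : ι → α) (v : ι → Bool) :
    (∃ x ∈ sunnySideUp α, ∀ j ∈ S, x (c j) = v j) ↔
      ¬ ∃ j ∈ S, ∃ j' ∈ S,
        (c j = c j' ∧ v j ≠ v j') ∨ (v j = true ∧ v j' = true ∧ c j ≠ c j') := by
  classical
  constructor
  · rintro ⟨x, hx, hxv⟩ ⟨j, hj, j', hj', (⟨hc, hv⟩ | ⟨hv, hv', hc⟩)⟩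
    · exact hv (by rw [← hxv j hj, ← hxv j' hj', hc])
    · exact hc (hx _ _ (by rw [hxv j hj, hv]) (by rw [hxv j' hj', hv']))
  · intro h
    push Not at h
    by_cases hv : ∃ j₀ ∈ S, v j₀ = true
    · obtain ⟨j₀, hj₀, hv₀⟩ := hv
      refine ⟨fun a => decide (a = c j₀), fun a b ha hb => by simp_all, fun j hj => ?_⟩
      obtain ⟨hc, hv⟩ := h j hj j₀ hj₀
      cases hvj : v j
      · simpa [hv₀, hvj] using hc
      · simpa using hv hvj hv₀
    · push Not at hv
      exact ⟨fun _ => false, by simp [sunnySideUp], fun j hj => by simpa using (hv j hj).symm⟩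

def ForbiddenWord {B : Type*} (Y : Set (ℕ → B)) (w : List B) : Prop :=
  ∀ y, ExtendsWord y w → y ∉ Y

theorem forbiddenWord_image_iff {B X : Type*} (f : X → ℕ → B) (S : Set X) (w : List B) :
    ForbiddenWord (f '' S) w ↔ ¬ ∃ x ∈ S, ExtendsWord (f x) w := by
  constructor
  · rintro h ⟨x, hx, hw⟩
    exact h _ hw ⟨x, hx, rfl⟩
  · rintro h y hw ⟨x, hx, rfl⟩
    exact h ⟨x, hx, hw⟩

-- Position `(n, i)` of `w` prescribes the value `w[n] i` at `c (n, i)`; `q` is a pair of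
-- positions whose prescriptions clash.
def SunnyConflict {α : Type*} {k : ℕ} (c : ℕ × Fin k → α) (w : List (Fin k → Bool))
    (q : (ℕ × Fin k) × (ℕ × Fin k)) : Prop :=
  q.1.1 < w.length ∧ q.2.1 < w.length ∧
    ((c q.1 = c q.2 ∧ w.getD q.1.1 default q.1.2 ≠ w.getD q.2.1 default q.2.2) ∨
      (w.getD q.1.1 default q.1.2 = true ∧ w.getD q.2.1 default q.2.2 = true ∧ c q.1 ≠ c q.2))

theorem forbiddenWord_sunnySideUp_iff {α : Type*} {k : ℕ} (c : ℕ × Fin k → α)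
    (w : List (Fin k → Bool)) :
    ForbiddenWord ((fun x n i => x (c (n, i))) '' sunnySideUp α) w ↔
      ∃ q, SunnyConflict c w q := by
  have hext (x : α → Bool) : ExtendsWord (fun n i => x (c (n, i))) w ↔
      ∀ j ∈ {j : ℕ × Fin k | j.1 < w.length}, x (c j) = w.getD j.1 default j.2 := by
    constructor
    · rintro h ⟨n, i⟩ (hn : n < w.length)
      rw [List.getD_eq_getElem _ _ hn]
      exact congrFun (h ⟨n, hn⟩) i
    · intro h n
      funext i
      exact (h (n, i) n.2).trans (by rw [List.getD_eq_getElem _ _ n.2]; rfl)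
  rw [forbiddenWord_image_iff]
  simp only [hext]
  rw [exists_mem_sunnySideUp_iff, not_not]
  simp only [Set.mem_ofPred_eq, Prod.exists, SunnyConflict, exists_and_left]

theorem computablePred_sunnyConflict {α : Type*} {k : ℕ} {c : ℕ × Fin k → α}
    (hc : ComputablePred fun q : (ℕ × Fin k) × (ℕ × Fin k) => c q.1 = c q.2) :
    ComputablePred fun p : List (Fin k → Bool) × ((ℕ × Fin k) × (ℕ × Fin k)) =>
      SunnyConflict c p.1 p.2 := by
  classical
  have hv : Primrec fun p : List (Fin k → Bool) × (ℕ × Fin k) =>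
      p.1.getD p.2.1 default p.2.2 :=
    Primrec.fin_app.comp ((Primrec.list_getD default).comp Primrec.fst
      (Primrec.fst.comp Primrec.snd)) (Primrec.snd.comp Primrec.snd)
  have hv₁ : Primrec fun p : List (Fin k → Bool) × ((ℕ × Fin k) × (ℕ × Fin k)) =>
      p.1.getD p.2.1.1 default p.2.1.2 :=
    hv.comp (Primrec.fst.pair (Primrec.fst.comp Primrec.snd))
  have hv₂ : Primrec fun p : List (Fin k → Bool) × ((ℕ × Fin k) × (ℕ × Fin k)) =>
      p.1.getD p.2.2.1 default p.2.2.2 :=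
    hv.comp (Primrec.fst.pair (Primrec.snd.comp Primrec.snd))
  have hlt : Primrec fun p : List (Fin k → Bool) × ((ℕ × Fin k) × (ℕ × Fin k)) =>
      decide (p.2.1.1 < p.1.length) && decide (p.2.2.1 < p.1.length) :=
    Primrec.and.comp
      (Primrec.nat_lt.decide.comp (Primrec.fst.comp (Primrec.fst.comp Primrec.snd))
        (Primrec.list_length.comp Primrec.fst))
      (Primrec.nat_lt.decide.comp (Primrec.fst.comp (Primrec.snd.comp Primrec.snd))
        (Primrec.list_length.comp Primrec.fst))
  have hclash : Primrec fun b : Bool × Bool × Bool =>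
      (b.1 && !(b.2.1 == b.2.2)) || (b.2.1 && b.2.2 && !b.1) :=
    Primrec.dom_finite _
  refine Computable.computablePred ((Primrec.and.to_comp.comp hlt.to_comp
    (hclash.to_comp.comp ((hc.decide.comp Computable.snd).pair
      (hv₁.pair hv₂).to_comp))).of_eq fun p => ?_)
  simp [SunnyConflict, Bool.and_assoc, Bool.beq_eq_decide_eq]

theorem re_forbiddenWord_sunnySideUp {α : Type*} {k : ℕ} {c : ℕ × Fin k → α}
    (hc : ComputablePred fun q : (ℕ × Fin k) × (ℕ × Fin k) => c q.1 = c q.2) :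
    RE (ForbiddenWord ((fun x n i => x (c (n, i))) '' sunnySideUp α)) :=
  (ComputablePred.rePred_exists (computablePred_sunnyConflict hc)).of_eq fun w =>
    (forbiddenWord_sunnySideUp_iff c w).symm

section Enumeration

variable {G : Type*} [Group G] {m : ℕ} (s : Fin m → G)

theorem exists_map_prod_eq (hs : Submonoid.closure (Set.range s) = ⊤) (g : G) :
    ∃ w : List (Fin m), (w.map s).prod = g := by
  have hg : g ∈ MonoidHom.mrange (FreeMonoid.lift s) := by
    rw [FreeMonoid.mrange_lift, hs]
    trivial
  obtain ⟨w, rfl⟩ := hg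
  exact ⟨w.toList, (FreeMonoid.lift_apply s w).symm⟩

def decodeList {α : Type*} [Encodable α] (n : ℕ) : List α := (decode n).getD []

theorem primrec_decodeList {α : Type*} [Primcodable α] : Primrec (decodeList (α := α)) :=
  Primrec.option_getD.comp Primrec.decode (Primrec.const [])

def enum (n : ℕ) : G := ((decodeList n).map s).prod

theorem enum_surjective (hs : Submonoid.closure (Set.range s) = ⊤) : Surjective (enum s) := by
  intro g
  obtain ⟨w, hw⟩ := exists_map_prod_eq s hs g
  exact ⟨encode w, by simpa [enum, decodeList] using hw⟩

theorem computablePred_map_prod_eq (hs : Submonoid.closure (Set.range s) = ⊤)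
    (hwp : ComputablePred fun w : List (Fin m) => (w.map s).prod = 1) :
    ComputablePred fun p : List (Fin m) × List (Fin m) => (p.1.map s).prod = (p.2.map s).prod := by
  classical
  choose inv hinv using fun i => exists_map_prod_eq s hs (s i)⁻¹
  have hrev (v : List (Fin m)) : ((v.reverse.flatMap inv).map s).prod = ((v.map s).prod)⁻¹ := by
    induction v with
    | nil => simp
    | cons i v ih =>
      rw [List.reverse_cons, List.flatMap_append, List.map_append, List.prod_append, ih]
      simp [hinv, mul_inv_rev]
  have hdiv : Primrec fun p : List (Fin m) × List (Fin m) => p.1 ++ p.2.reverse.flatMap inv :=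
    Primrec.list_append.comp Primrec.fst
      (Primrec.list_flatMap (Primrec.list_reverse.comp Primrec.snd)
        ((Primrec.dom_finite inv).comp Primrec.snd).to₂)
  refine Computable.computablePred ((hwp.decide.comp hdiv.to_comp).of_eq fun p => ?_)
  simp only [List.map_append, List.prod_append, hrev, mul_inv_eq_one]

end Enumeration

section Pullback

variable {G A : Type*} [Group G]

noncomputable def pullShift (e : ℕ → G) (g : G) (y : ℕ → A) : ℕ → A :=
  fun n => y (invFun e (g⁻¹ * e n))

def setRepMap {k : ℕ} (t : Fin k → G) (e : ℕ → G) (x : G → A) : ℕ → Fin k → A :=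
  fun n i => x ((t i)⁻¹ * e n)

variable {e : ℕ → G}

theorem pullShift_comp (he : Surjective e) (g : G) (x : G → A) :
    pullShift e g (x ∘ e) = shift g x ∘ e := by
  funext n
  simp [pullShift, shift, rightInverse_invFun he _]

theorem isActionOn_pullShift (he : Surjective e) {X : Set (G → A)}
    (hX : ∀ (g : G) (x : G → A), x ∈ X → shift g x ∈ X) :
    IsActionOn (pullShift e) ((· ∘ e) '' X) := by
  refine ⟨?_, ?_, ?_⟩
  · rintro g _ ⟨x, hx, rfl⟩
    exact ⟨shift g x, hX g x hx, (pullShift_comp he g x).symm⟩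
  · rintro _ ⟨x, -, rfl⟩
    rw [pullShift_comp he, shift_one]
  · rintro g h _ ⟨x, -, rfl⟩
    rw [pullShift_comp he, pullShift_comp he, pullShift_comp he, shift_mul]

theorem setRep_pullShift (he : Surjective e) {k : ℕ} (t : Fin k → G) (X : Set (G → A)) :
    SetRep t (pullShift e) ((· ∘ e) '' X) = setRepMap t e '' X := by
  ext y
  constructor
  · rintro ⟨_, ⟨x, hx, rfl⟩, hy⟩
    refine ⟨x, hx, funext fun n => funext fun i => ?_⟩
    have hyi := congrFun (hy i) n
    simp only [pullShift_comp he] at hyi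
    exact hyi.symm
  · rintro ⟨x, hx, rfl⟩
    exact ⟨x ∘ e, ⟨x, hx, rfl⟩, fun i => by rw [pullShift_comp he]; rfl⟩

variable [TopologicalSpace A]

theorem isEffClosedActionWith_pullShift [CompactSpace A] [T2Space A] [Primcodable A]
    (he : Surjective e) {X : Set (G → A)} (hX : IsSubshift X) {k : ℕ} {t : Fin k → G}
    (ht₁ : ∃ i, t i = 1) (ht : Submonoid.closure (Set.range t) = ⊤)
    (hre : RE (ForbiddenWord (setRepMap t e '' X))) :
    IsEffClosedActionWith t (pullShift e) ((· ∘ e) '' X) := by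
  have hXc : IsCompact X := hX.1.isCompact
  refine ⟨(hXc.image (continuous_pi fun n => continuous_apply (e n))).isClosed,
    isActionOn_pullShift he hX.2, ht₁, ht, ?_, ?_⟩ <;> rw [setRep_pullShift he]
  · exact (hXc.image (continuous_pi fun n => continuous_pi fun i => continuous_apply _)).isClosed
  · exact hre

theorem isSofic_of_isFactorOfSFT_pullShift (he : Surjective e) {X : Set (G → A)}
    (h : IsFactorOfSFT (pullShift e) ((· ∘ e) '' X)) : IsSofic X := by
  obtain ⟨k, Z, φ, hZ, hcont, hmaps, hsurj, hequiv⟩ := h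
  refine ⟨k, Z, fun z => φ z ∘ invFun e, hZ,
    (continuous_pi fun g => continuous_apply (invFun e g)).comp_continuousOn hcont, ?_, ?_, ?_⟩
  · intro z hz
    obtain ⟨x, hx, hφ⟩ := hmaps hz
    simpa [← hφ, comp_comp_invFun he] using hx
  · intro x hx
    obtain ⟨z, hz, hφ⟩ := hsurj ⟨x, hx, rfl⟩
    exact ⟨z, hz, by simp only [hφ, comp_comp_invFun he]⟩
  · intro g z hz
    obtain ⟨x, -, hφ⟩ := hmaps hz
    simp only [hequiv g z hz, ← hφ, pullShift_comp he, comp_comp_invFun he]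

end Pullback

theorem re_forbiddenWord_setRepMap_sunnySideUp {G : Type*} [Group G] {m : ℕ} {s : Fin m → G}
    (hs : Submonoid.closure (Set.range s) = ⊤)
    (hwp : ComputablePred fun w : List (Fin m) => (w.map s).prod = 1) {k : ℕ} (t : Fin k → G) :
    RE (ForbiddenWord (setRepMap t (enum s) '' sunnySideUp G)) := by
  classical
  choose inv hinv using fun i => exists_map_prod_eq s hs (t i)⁻¹
  -- `inv i ++ decodeList n` spells `(t i)⁻¹ * enum s n`, so the word problem compares them
  have hword : Primrec fun j : ℕ × Fin k => inv j.2 ++ decodeList j.1 :=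
    Primrec.list_append.comp ((Primrec.dom_finite inv).comp Primrec.snd)
      (primrec_decodeList.comp Primrec.fst)
  refine re_forbiddenWord_sunnySideUp (c := fun j => (t j.2)⁻¹ * enum s j.1)
    (Computable.computablePred ?_)
  refine ((computablePred_map_prod_eq s hs hwp).decide.comp
    ((hword.comp Primrec.fst).pair (hword.comp Primrec.snd)).to_comp).of_eq fun q => ?_
  exact decide_eq_decide.mpr (by simp [hinv, enum])

theorem isEffClosedActionWith_sunnySideUp {G : Type*} [Group G] {m : ℕ} {s : Fin m → G}
    (hs : Submonoid.closure (Set.range s) = ⊤)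
    (hwp : ComputablePred fun w : List (Fin m) => (w.map s).prod = 1) :
    IsEffClosedActionWith (Fin.cons 1 s : Fin (m + 1) → G) (pullShift (enum s))
      ((· ∘ enum s) '' sunnySideUp G) := by
  have hcons : Submonoid.closure (Set.range (Fin.cons 1 s : Fin (m + 1) → G)) = ⊤ := by
    rw [eq_top_iff, ← hs, Fin.range_cons]
    exact Submonoid.closure_mono (Set.subset_insert _ _)
  exact isEffClosedActionWith_pullShift (enum_surjective s hs) (isSubshift_sunnySideUp G)
    ⟨0, rfl⟩ hcons (re_forbiddenWord_setRepMap_sunnySideUp hs hwp _)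

theorem sunnySideUp_isSofic_general
    (G : Type*) [Group G]
    (hwp : DecidableWordProblem G) (hss : SelfSimulable G) :
    IsSofic {x : G → Bool | ∀ g h : G, x g = true → x h = true → g = h} := by
  obtain ⟨m, s, hs, hwp⟩ := hwp
  exact isSofic_of_isFactorOfSFT_pullShift (enum_surjective s hs)
    (hss _ _ ⟨m + 1, _, isEffClosedActionWith_sunnySideUp hs hwp⟩)

/-- For a finitely generated self-simulable group with decidable word problem,
the sunny-side up subshift is sofic. -/
theorem sunnySideUp_isSofic
    (G : Type*) [Group G] (hfg : Group.FG G)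
    (hwp : DecidableWordProblem G) (hss : SelfSimulable G) :
    IsSofic {x : G → Bool | ∀ g h : G, x g = true → x h = true → g = h} :=
  sunnySideUp_isSofic_general G hwp hss

end SelfSim
end

section
/- Let Γ be a group which is not finitely generated, let A be a finite alphabet, and let Y ⊆ A^Γ be a nonempty sofic Γ-subshift. Then either Y is a singleton or Y is uncountable. -/
open scoped Pointwise

/-!
Let `φ : Z → Y` be a factor map onto `Y` from an SFT `Z ⊆ (Fin k)^G` given by patterns on the
finite shape `F`, and suppose `Y` has two points. By compactness of `Z`, the symbol `φ(x)(1)`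
only depends on `x` restricted to a finite window `D`, and there are `x₁, x₂ ∈ Z` with
`φ(x₁)(1) ≠ φ(x₂)(1)`. Since `G` is not finitely generated, the subgroup `H` generated by
`F ∪ D` has infinitely many left cosets. Filling every coset independently with a translate of
`x₁` or `x₂` gives a point of `Z`, because the constraints of `Z` only see one coset at a time,
and the image under `φ` remembers the choice made on each coset. This embeds the power set of
the infinite set `G ⧸ H` into `Y`.
-/

open Function Set Filter Topology

theorem Group.fg_of_finite_quotient_closure {G : Type*} [Group G] {E : Set G} (hE : E.Finite)
    [Finite (G ⧸ Subgroup.closure E)] : Group.FG G := by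
  set H := Subgroup.closure E
  set K := Subgroup.closure (E ∪ range (Quotient.out : G ⧸ H → G))
  refine Group.fg_iff.mpr ⟨E ∪ range (Quotient.out : G ⧸ H → G), eq_top_iff.mpr fun g _ => ?_,
    hE.union (finite_range _)⟩
  have hout : (g : G ⧸ H).out ∈ K := Subgroup.subset_closure (Or.inr ⟨_, rfl⟩)
  have hrest : (g : G ⧸ H).out⁻¹ * g ∈ K :=
    Subgroup.closure_mono subset_union_left (QuotientGroup.eq.mp (QuotientGroup.out_eq' _))
  simpa using mul_mem hout hrest

theorem Set.not_countable_of_injective_of_mapsTo {α β : Type*} [Infinite α] {f : Set α → β}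
    (hf : Injective f) {Y : Set β} (hY : ∀ S, f S ∈ Y) : ¬ Y.Countable := fun hc => by
  have : Uncountable (Set α) := by
    rw [← Cardinal.aleph0_lt_mk_iff, Cardinal.mk_set]
    exact (Cardinal.aleph0_le_mk α).trans_lt (Cardinal.cantor _)
  have := hc.to_subtype
  exact not_injective_uncountable_countable (codRestrict f Y hY) (hf.codRestrict hY)

theorem exists_finset_eqOn_subset_of_mem_nhds {ι B : Type*} [TopologicalSpace B]
    [DiscreteTopology B] {z : ι → B} {U : Set (ι → B)} (hU : U ∈ 𝓝 z) :
    ∃ D : Finset ι, {y | EqOn y z D} ⊆ U := by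
  rw [nhds_pi] at hU
  obtain ⟨D, t, ht, hsub⟩ := mem_pi'.mp hU
  refine ⟨D, fun y hy => hsub fun i hi => ?_⟩
  rw [hy hi]
  exact mem_of_mem_nhds (ht i)

theorem eqOn_finset_mem_nhds {ι B : Type*} [TopologicalSpace B] [DiscreteTopology B]
    (z : ι → B) (D : Finset ι) : {y | EqOn y z D} ∈ 𝓝 z :=
  set_pi_mem_nhds (s := fun i => {z i}) D.finite_toSet fun _ _ => mem_nhds_discrete.mpr rfl

theorem ContinuousOn.exists_finset_eqOn_imp_eq {ι B C : Type*} [TopologicalSpace B]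
    [DiscreteTopology B] [TopologicalSpace C] [DiscreteTopology C] {Z : Set (ι → B)}
    {f : (ι → B) → C} (hf : ContinuousOn f Z) (hZ : IsCompact Z) :
    ∃ D : Finset ι, ∀ x ∈ Z, ∀ x' ∈ Z, EqOn x x' D → f x = f x' := by
  classical
  have hloc : ∀ z ∈ Z, ∃ D : Finset ι, ∀ y ∈ Z, EqOn y z D → f y = f z := by
    intro z hz
    obtain ⟨U, hU, hUf⟩ := mem_nhdsWithin_iff_exists_mem_nhds_inter.mp
      (hf z hz (mem_nhds_discrete.mpr (mem_singleton (f z))))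
    obtain ⟨D, hD⟩ := exists_finset_eqOn_subset_of_mem_nhds hU
    exact ⟨D, fun y hy hyz => hUf ⟨hD hyz, hy⟩⟩
  choose D hD using hloc
  obtain ⟨T, hT⟩ := hZ.elim_nhds_subcover' (fun z hz => {y | EqOn y z (D z hz)})
    fun z hz => eqOn_finset_mem_nhds z (D z hz)
  refine ⟨T.biUnion fun z => D z z.2, fun x hx x' hx' hxx' => ?_⟩
  obtain ⟨z, hzT, hxz⟩ := mem_iUnion₂.mp (hT hx)
  have hx'z : EqOn x' z (D z z.2) := fun i hi =>
    (hxx' (Finset.mem_biUnion.mpr ⟨z, hzT, hi⟩)).symm.trans (hxz hi)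
  rw [hD z z.2 x hx hxz, hD z z.2 x' hx' hx'z]

namespace SelfSim

section

variable {G A : Type*} [Group G]

theorem IsSFT.isClosed [TopologicalSpace A] [DiscreteTopology A] {Z : Set (G → A)}
    (hZ : IsSFT Z) : IsClosed Z := by
  obtain ⟨F, L, hFL⟩ := hZ
  have : Z = ⋂ g : G, (fun x : G → A => fun h : F => x (g * h)) ⁻¹' L := by
    ext x; simp [hFL]
  rw [this]
  exact isClosed_iInter fun g =>
    (isClosed_discrete L).preimage (continuous_pi fun h => continuous_apply _)

theorem IsSFT.shift_mem {Z : Set (G → A)} (hZ : IsSFT Z) (g : G) {x : G → A} (hx : x ∈ Z) :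
    shift g x ∈ Z := by
  obtain ⟨F, L, hFL⟩ := hZ
  rw [hFL]
  intro g'
  simpa [shift, mul_assoc] using (hFL x).mp hx (g⁻¹ * g')

theorem IsFactorMapOnto.apply_eq_apply_shift_one [TopologicalSpace A] {B : Type*}
    [TopologicalSpace B] {Z : Set (G → A)} {φ : (G → A) → G → B} {Y : Set (G → B)}
    (hφ : IsFactorMapOnto Z φ shift Y) {x : G → A} (hx : x ∈ Z) (g : G) :
    φ x g = φ (shift g⁻¹ x) 1 := by
  simp [hφ.2.2.2 g⁻¹ x hx, shift]

theorem IsFactorMapOnto.exists_apply_one_ne [TopologicalSpace A] {B : Type*}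
    [TopologicalSpace B] {Z : Set (G → A)} {φ : (G → A) → G → B} {Y : Set (G → B)}
    (hφ : IsFactorMapOnto Z φ shift Y) (hZ : ∀ g, ∀ x ∈ Z, shift g x ∈ Z)
    {y₁ y₂ : G → B} (hy₁ : y₁ ∈ Y) (hy₂ : y₂ ∈ Y) (hne : y₁ ≠ y₂) :
    ∃ x₁ ∈ Z, ∃ x₂ ∈ Z, φ x₁ 1 ≠ φ x₂ 1 := by
  obtain ⟨g, hg⟩ := Function.ne_iff.mp hne
  obtain ⟨x₁, hx₁, rfl⟩ := hφ.2.2.1 hy₁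
  obtain ⟨x₂, hx₂, rfl⟩ := hφ.2.2.1 hy₂
  rw [hφ.apply_eq_apply_shift_one hx₁, hφ.apply_eq_apply_shift_one hx₂] at hg
  exact ⟨_, hZ _ _ hx₁, _, hZ _ _ hx₂, hg⟩

noncomputable def glue (H : Subgroup G) (c : G ⧸ H → G → A) : G → A :=
  fun g => c g ((g : G ⧸ H).out⁻¹ * g)

theorem glue_mul_of_mem {H : Subgroup G} (c : G ⧸ H → G → A) (g : G) {h : G} (hh : h ∈ H) :
    glue H c (g * h) = c g ((g : G ⧸ H).out⁻¹ * g * h) := by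
  simp [glue, QuotientGroup.mk_mul_of_mem g hh, mul_assoc]

theorem shift_out_inv_glue_of_mem {H : Subgroup G} (c : G ⧸ H → G → A) (q : G ⧸ H) {h : G}
    (hh : h ∈ H) : shift q.out⁻¹ (glue H c) h = c q h := by
  simp [shift, glue_mul_of_mem c _ hh]

theorem glue_mem {Z : Set (G → A)} {F : Finset G} {L : Set (F → A)}
    (hZ : ∀ x, x ∈ Z ↔ ∀ g : G, (fun h : F => x (g * h)) ∈ L) {H : Subgroup G}
    (hFH : ∀ h ∈ F, h ∈ H) {c : G ⧸ H → G → A} (hc : ∀ q, c q ∈ Z) : glue H c ∈ Z := by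
  refine (hZ _).mpr fun g => ?_
  simpa only [glue_mul_of_mem c g (hFH _ (Finset.coe_mem _))] using (hZ _).mp (hc g) _

theorem IsFactorMapOnto.apply_glue_out [TopologicalSpace A] {B : Type*} [TopologicalSpace B]
    {Z : Set (G → A)} {φ : (G → A) → G → B} {Y : Set (G → B)}
    (hφ : IsFactorMapOnto Z φ shift Y) (hZ : ∀ g, ∀ x ∈ Z, shift g x ∈ Z) {D : Finset G}
    (hD : ∀ x ∈ Z, ∀ x' ∈ Z, EqOn x x' D → φ x 1 = φ x' 1) {H : Subgroup G}
    (hDH : ∀ h ∈ D, h ∈ H) {c : G ⧸ H → G → A} (hc : ∀ q, c q ∈ Z) (hglue : glue H c ∈ Z)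
    (q : G ⧸ H) : φ (glue H c) q.out = φ (c q) 1 := by
  rw [hφ.apply_eq_apply_shift_one hglue]
  exact hD _ (hZ _ _ hglue) _ (hc q) fun h hh => shift_out_inv_glue_of_mem c q (hDH h hh)

end

theorem sofic_subshift_singleton_or_uncountable_general
    (G : Type*) [Group G] (hfg : ¬ Group.FG G)
    (A : Type*) [TopologicalSpace A] [DiscreteTopology A]
    (Y : Set (G → A)) (hne : Y.Nonempty) (hsofic : IsSofic Y) :
    (∃ y, Y = {y}) ∨ ¬ Y.Countable := by
  classical
  refine hne.exists_eq_singleton_or_nontrivial.imp_right fun ⟨y₁, hy₁, y₂, hy₂, hy₁₂⟩ => ?_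
  obtain ⟨k, Z, φ, hZ, hφ⟩ := hsofic
  have hshift : ∀ g, ∀ x ∈ Z, shift g x ∈ Z := fun g _ hx => hZ.shift_mem g hx
  obtain ⟨x₁, hx₁, x₂, hx₂, hx₁₂⟩ := hφ.exists_apply_one_ne hshift hy₁ hy₂ hy₁₂
  obtain ⟨D, hD⟩ := ((continuous_apply 1).comp_continuousOn hφ.1).exists_finset_eqOn_imp_eq
    hZ.isClosed.isCompact
  obtain ⟨F, L, hFL⟩ := hZ
  set H := Subgroup.closure ((F : Set G) ∪ D)
  have : Infinite (G ⧸ H) := not_finite_iff_infinite.mp fun _ =>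
    hfg (Group.fg_of_finite_quotient_closure (F.finite_toSet.union D.finite_toSet))
  have hFH : ∀ h ∈ F, h ∈ H := fun h hh => Subgroup.subset_closure (Or.inl hh)
  have hDH : ∀ h ∈ D, h ∈ H := fun h hh => Subgroup.subset_closure (Or.inr hh)
  let c (S : Set (G ⧸ H)) (q : G ⧸ H) : G → Fin k := if q ∈ S then x₁ else x₂
  have hc : ∀ S q, c S q ∈ Z := fun S q => by dsimp only [c]; split <;> assumption
  have hglue : ∀ S, glue H (c S) ∈ Z := fun S => glue_mem hFL hFH (hc S)
  have hval : ∀ S q, φ (glue H (c S)) q.out = if q ∈ S then φ x₁ 1 else φ x₂ 1 := fun S q => by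
    rw [hφ.apply_glue_out hshift hD hDH (hc S) (hglue S), apply_ite (φ · 1)]
  refine not_countable_of_injective_of_mapsTo (fun S S' hSS' => ?_) fun S => hφ.2.1 (hglue S)
  ext q
  have := congrFun hSS' q.out
  rw [hval, hval] at this
  by_cases h : q ∈ S <;> by_cases h' : q ∈ S' <;> simp_all

/-- A nonempty sofic subshift over a group which is not finitely generated is
a singleton or uncountable. -/
theorem sofic_subshift_singleton_or_uncountable
    (G : Type*) [Group G] (hfg : ¬ Group.FG G)
    (A : Type*) [TopologicalSpace A] [DiscreteTopology A] [Finite A]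
    (Y : Set (G → A)) (hne : Y.Nonempty) (hsofic : IsSofic Y) :
    (∃ y, Y = {y}) ∨ ¬ Y.Countable :=
  sofic_subshift_singleton_or_uncountable_general G hfg A Y hne hsofic

end SelfSim
end

section
/- Suppose Γ is a group generated by a finite set S ∋ 1 which admits a faithful effectively closed action Γ ↷ X on a closed subset X ⊆ {0,1}^ℕ. Then the word problem of Γ is in Π⁰₂: there exists a decidable relation R on triples (w, m, n), where w ranges over words over S and m, n over natural numbers, such that a word w evaluates to the identity of Γ if and only if for every m there exists n with R(w, m, n). -/
open scoped Pointwise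

/-!
A word `w` acts trivially iff it moves no coordinate `n` of any point of `X`; faithfulness turns
this into `w = 1`, so it suffices that "`w` fixes coordinate `n` of every point" is `Σ⁰₁`
uniformly in `(w, n)`. A point moved by `w` at coordinate `n` amounts to a chain of points
`y₀, …, y_{|w|}` of the set representation, consecutive ones linked through the letters of `w`,
whose base points differ at `n`. These chains form an effectively closed subset of a compact
space, so by compactness there are none iff for some `N` every candidate chain of length `N` is
refuted by stage `N`: locally, or because a prefix of one of its strands has been enumerated as a
word whose cylinder misses the set representation.
-/

section Computability
variable {α β : Type*} [Primcodable α] [Primcodable β]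

theorem PrimrecPred.forall_mem_list_of {p : α × β → Prop} {L : α → List β} (hL : Primrec L)
    (hp : PrimrecPred p) : PrimrecPred fun a => ∀ x ∈ L a, p (a, x) :=
  (PrimrecRel.forall_mem_list (R := fun x a => p (a, x))
    (hp.comp (Primrec.snd.pair Primrec.fst))).comp hL Primrec.id

theorem PrimrecPred.forall_lt_bound {p : α × ℕ → Prop} {f : α → ℕ} (hf : Primrec f)
    (hp : PrimrecPred p) : PrimrecPred fun a => ∀ x < f a, p (a, x) :=
  (hp.forall_mem_list_of (Primrec.list_range.comp hf)).of_eq fun _ => by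
    simp only [List.mem_range]

theorem PrimrecPred.forall_le_bound {p : α × ℕ → Prop} {f : α → ℕ} (hf : Primrec f)
    (hp : PrimrecPred p) : PrimrecPred fun a => ∀ x ≤ f a, p (a, x) :=
  (hp.forall_lt_bound (Primrec.succ.comp hf)).of_eq fun _ => by simp only [Nat.lt_succ_iff]

theorem Primrec.sections_replicate :
    Primrec₂ fun (l : List β) n => (List.replicate n l).sections := by
  have hstep : Primrec₂ fun (l : List β) (q : ℕ × List (List β)) =>
      q.2.flatMap fun f => l.map (· :: f) :=
    Primrec.list_flatMap (Primrec.snd.comp Primrec.snd)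
      (Primrec.list_map (Primrec.fst.comp Primrec.fst)
        (Primrec.list_cons.comp Primrec.snd (Primrec.snd.comp Primrec.fst)).to₂).to₂
  refine (Primrec.nat_rec (Primrec.const [[]]) hstep).of_eq fun l n => ?_
  induction n with
  | zero => rfl
  | succ n ih => simp [List.replicate_succ, ih]

end Computability

theorem List.mem_sections_replicate {β : Type*} {l f : List β} {n : ℕ} :
    f ∈ (List.replicate n l).sections ↔ f.length = n ∧ ∀ a ∈ f, a ∈ l := by
  induction n generalizing f with
  | zero => cases f <;> simp
  | succ n ih =>
    cases f with
    | nil => simp [List.replicate_succ]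
    | cons a f => simp [List.replicate_succ, ih, and_comm, and_left_comm]

theorem DependsOn.isLocallyConstant {ι β γ : Type*} [TopologicalSpace β] [DiscreteTopology β]
    {f : (ι → β) → γ} {s : Set ι} (hf : DependsOn f s) (hs : s.Finite) :
    IsLocallyConstant f := by
  refine (IsLocallyConstant.iff_exists_open f).2 fun x => ⟨s.pi fun i => {x i}, ?_, ?_, ?_⟩
  · exact isOpen_set_pi hs fun i _ => isOpen_discrete _
  · exact Set.mem_pi.2 fun i _ => rfl
  · exact fun y hy => hf fun i hi => hy i hi

namespace SelfSim

open Nat.Partrec.Code in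
theorem RE.exists_monotone_primrec_stages {α : Type*} [Primcodable α] {p : α → Prop}
    (hp : RE p) :
    ∃ S : ℕ → α → Prop, PrimrecRel S ∧ Monotone S ∧ ∀ a, p a ↔ ∃ k, S k a := by
  obtain ⟨c, hc⟩ := exists_code.1 hp
  refine ⟨fun k a => (evaln k c (Encodable.encode a)).isSome, ?_, ?_, fun a => ?_⟩
  · refine Primrec.primrecPred ?_
    simpa using Primrec.option_isSome.comp (primrec_evaln.comp
      ((Primrec.fst.pair (Primrec.const c)).pair (Primrec.encode.comp Primrec.snd)))
  · intro k k' hk a h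
    obtain ⟨x, hx⟩ := Option.isSome_iff_exists.1 h
    exact Option.isSome_iff_exists.2 ⟨x, evaln_mono hk hx⟩
  · have hdom : p a ↔ (eval c (Encodable.encode a)).Dom := by
      simp [hc, Encodable.encodek, Part.assert]
    simp only [hdom, Part.dom_iff_mem, evaln_complete, Option.isSome_iff_exists, Option.mem_def]
    exact exists_comm

section Cylinders
variable {β : Type*}

def CylinderDisjoint (Z : Set (ℕ → β)) (v : List β) : Prop :=
  ∀ y : ℕ → β, ExtendsWord y v → y ∉ Z

theorem extendsWord_map_range {y z : ℕ → β} {L : ℕ} :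
    ExtendsWord z ((List.range L).map y) ↔ ∀ i < L, z i = y i := by
  simp [ExtendsWord, Fin.forall_iff]

theorem exists_cylinderDisjoint_of_notMem [TopologicalSpace β] {Z : Set (ℕ → β)}
    (hZ : IsClosed Z) {y : ℕ → β} (hy : y ∉ Z) :
    ∃ L, CylinderDisjoint Z ((List.range L).map y) := by
  obtain ⟨I, u, hu, hsub⟩ := isOpen_pi_iff.1 hZ.isOpen_compl y hy
  refine ⟨I.sup id + 1, fun z hz hzZ => hsub (Set.mem_pi.2 fun i hi => ?_) hzZ⟩
  rw [extendsWord_map_range.1 hz i (Nat.lt_succ_of_le (Finset.le_sup (f := id) hi))]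
  exact (hu i hi).2

def SurvivesStage (S : ℕ → List β → Prop) (N : ℕ) (y : ℕ → β) : Prop :=
  ∀ L ≤ N, ¬ S N ((List.range L).map y)

theorem SurvivesStage.of_succ {S : ℕ → List β → Prop} (hS : Monotone S) {N : ℕ}
    {y : ℕ → β} (h : SurvivesStage S (N + 1) y) : SurvivesStage S N y :=
  fun L hL hSL => h L (by omega) (hS N.le_succ _ hSL)

theorem mem_iff_forall_survivesStage [TopologicalSpace β] {Z : Set (ℕ → β)} (hZ : IsClosed Z)
    {S : ℕ → List β → Prop} (hmono : Monotone S)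
    (hS : ∀ v, CylinderDisjoint Z v ↔ ∃ k, S k v) {y : ℕ → β} :
    y ∈ Z ↔ ∀ N, SurvivesStage S N y := by
  refine ⟨fun hy N L _ hSL => (hS _).2 ⟨N, hSL⟩ y (extendsWord_map_range.2 fun _ _ => rfl) hy,
    fun h => ?_⟩
  by_contra hy
  obtain ⟨L, hL⟩ := exists_cylinderDisjoint_of_notMem hZ hy
  obtain ⟨k, hk⟩ := (hS _).1 hL
  exact h (max L k) L (le_max_left _ _) (hmono (le_max_right _ _) _ hk)

end Cylinders

section Chains
variable {G A : Type*} [Group G] {m : ℕ} {s : Fin m → G} {act : G → (ℕ → A) → ℕ → A}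
  {X : Set (ℕ → A)} {i₀ : Fin m}

theorem mem_setRep_iff (hi₀ : s i₀ = 1) (h1 : ∀ x ∈ X, act 1 x = x)
    {y : ℕ → Fin m → A} :
    y ∈ SetRep s act X ↔
      (fun t => y t i₀) ∈ X ∧ ∀ i, (fun t => y t i) = act (s i) (fun t => y t i₀) := by
  refine ⟨fun ⟨x, hx, hy⟩ => ?_, fun ⟨hx, hy⟩ => ⟨_, hx, hy⟩⟩
  have hbase : (fun t => y t i₀) = x := by rw [hy i₀, hi₀, h1 x hx]
  exact ⟨hbase ▸ hx, fun i => hbase ▸ hy i⟩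

/- Each strand `j` lies in the set representation, so it is `(s i · x_j)_i` for the base point
`x_j` read off at `i₀` (as `s i₀ = 1`); the links say `x_j = w_j · x_{j+1}`, so that
`x_0 = w · x_{|w|}`. -/
variable (s act X i₀) in
def IsChain (w : List (Fin m)) (Y : ℕ × ℕ → Fin m → A) : Prop :=
  (∀ j ≤ w.length, (fun t => Y (j, t)) ∈ SetRep s act X) ∧
    ∀ j < w.length, ∀ t, Y (j + 1, t) (w.getD j i₀) = Y (j, t) i₀

theorem IsChain.base_eq (hi₀ : s i₀ = 1) (h1 : ∀ x ∈ X, act 1 x = x)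
    (hmul : ∀ (g h : G) (x : ℕ → A), x ∈ X → act (g * h) x = act g (act h x))
    {w : List (Fin m)} {Y : ℕ × ℕ → Fin m → A} (hY : IsChain s act X i₀ w Y) :
    (fun t => Y (0, t) i₀) = act (w.map s).prod (fun t => Y (w.length, t) i₀) := by
  induction w generalizing Y with
  | nil => simpa using (h1 _ ((mem_setRep_iff hi₀ h1).1 (hY.1 0 le_rfl)).1).symm
  | cons a w ih =>
    obtain ⟨hmem, hlink⟩ := hY
    have htail : IsChain s act X i₀ w fun q => Y (q.1 + 1, q.2) :=
      ⟨fun j hj => hmem (j + 1) (by simpa using hj),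
        fun j hj t => hlink (j + 1) (by simpa using hj) t⟩
    obtain ⟨-, hY1⟩ := (mem_setRep_iff hi₀ h1).1 (hmem 1 (by simp))
    obtain ⟨hlast, -⟩ := (mem_setRep_iff hi₀ h1).1 (hmem (w.length + 1) (by simp))
    have hhead : (fun t => Y (0, t) i₀) = fun t => Y (1, t) a :=
      funext fun t => (hlink 0 (by simp) t).symm
    rw [hhead, hY1 a, ih htail, List.map_cons, List.prod_cons]
    exact (hmul _ _ _ hlast).symm

variable (s act) in
def orbitChain (w : List (Fin m)) (x : ℕ → A) : ℕ × ℕ → Fin m → A :=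
  fun q i => act (s i) (act ((w.drop q.1).map s).prod x) q.2

theorem orbitChain_base (hact : IsActionOn act X) (hi₀ : s i₀ = 1) (w : List (Fin m))
    {x : ℕ → A} (hx : x ∈ X) (j : ℕ) :
    (fun t => orbitChain s act w x (j, t) i₀) = act ((w.drop j).map s).prod x := by
  simp only [orbitChain, hi₀]
  exact hact.2.1 _ (hact.1 _ hx)

theorem isChain_orbitChain (hact : IsActionOn act X) (hi₀ : s i₀ = 1) {w : List (Fin m)}
    {x : ℕ → A} (hx : x ∈ X) : IsChain s act X i₀ w (orbitChain s act w x) := by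
  refine ⟨fun j _ => ⟨act ((w.drop j).map s).prod x, hact.1 _ hx, fun i => rfl⟩,
    fun j hj t => ?_⟩
  rw [congrFun (orbitChain_base hact hi₀ w hx j) t, List.drop_eq_getElem_cons hj, List.map_cons,
    List.prod_cons, hact.2.2 _ _ _ hx, List.getD_eq_getElem _ _ hj]
  rfl

theorem exists_isChain_ne_iff (hact : IsActionOn act X) (hi₀ : s i₀ = 1) {w : List (Fin m)}
    {n : ℕ} :
    (∃ Y, IsChain s act X i₀ w Y ∧ Y (0, n) i₀ ≠ Y (w.length, n) i₀) ↔
      ∃ x ∈ X, act (w.map s).prod x n ≠ x n := by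
  constructor
  · rintro ⟨Y, hY, hne⟩
    refine ⟨_, ((mem_setRep_iff hi₀ hact.2.1).1 (hY.1 _ le_rfl)).1, fun h => hne ?_⟩
    rw [← h]
    exact congrFun (hY.base_eq hi₀ hact.2.1 hact.2.2) n
  · rintro ⟨x, hx, hne⟩
    refine ⟨_, isChain_orbitChain hact hi₀ hx, ?_⟩
    have h0 := congrFun (orbitChain_base hact hi₀ w hx 0) n
    have hlast := congrFun (orbitChain_base hact hi₀ w hx w.length) n
    simp only [List.drop_zero, List.drop_length, List.map_nil, List.prod_nil] at h0 hlast
    rwa [h0, hlast, hact.2.1 x hx]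

end Chains

section Viability
variable {A : Type*} {m : ℕ} {i₀ : Fin m} {S : ℕ → List (Fin m → A) → Prop}
  {w : List (Fin m)} {n N : ℕ}

/- What can be checked about a chain whose base points differ at `n` from its first `N` columns,
using stage `N` of the enumeration `S` of words whose cylinders miss the set representation. -/
variable (i₀ S) in
def Viable (w : List (Fin m)) (n N : ℕ) (Y : ℕ × ℕ → Fin m → A) : Prop :=
  (∀ j < w.length, ∀ t < N, Y (j + 1, t) (w.getD j i₀) = Y (j, t) i₀) ∧
    (n < N → Y (0, n) i₀ ≠ Y (w.length, n) i₀) ∧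
    ∀ j ≤ w.length, SurvivesStage S N fun t => Y (j, t)

theorem dependsOn_viable :
    DependsOn (Viable i₀ S w n N) ↑(Finset.range (w.length + 1) ×ˢ Finset.range N) := by
  intro Y Y' h
  have hY : ∀ j ≤ w.length, ∀ t < N, Y (j, t) = Y' (j, t) := fun j hj t ht =>
    h (j, t) (by simp; omega)
  have hstrand : ∀ j ≤ w.length, ∀ L ≤ N,
      (List.range L).map (fun t => Y (j, t)) = (List.range L).map fun t => Y' (j, t) :=
    fun j hj L hL => List.map_congr_left fun t ht => hY j hj t (by simp at ht; omega)
  simp only [Viable, SurvivesStage]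
  refine propext (and_congr (forall₂_congr fun j hj => forall₂_congr fun t ht => ?_)
    (and_congr (imp_congr_right fun hn => ?_) (forall₂_congr fun j hj => forall₂_congr
      fun L hL => by rw [hstrand j hj L hL])))
  · rw [hY (j + 1) hj t ht, hY j hj.le t ht]
  · rw [hY 0 (Nat.zero_le _) n hn, hY w.length le_rfl n hn]

theorem Viable.of_succ (hS : Monotone S) {Y : ℕ × ℕ → Fin m → A}
    (h : Viable i₀ S w n (N + 1) Y) : Viable i₀ S w n N Y :=
  ⟨fun j hj t ht => h.1 j hj t (by omega), fun hn => h.2.1 (by omega),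
    fun j hj => (h.2.2 j hj).of_succ hS⟩

theorem forall_viable_iff {G : Type*} [Group G] {s : Fin m → G}
    {act : G → (ℕ → A) → ℕ → A}
    {X : Set (ℕ → A)} [TopologicalSpace A] (hZ : IsClosed (SetRep s act X))
    (hmono : Monotone S)
    (hS : ∀ v, CylinderDisjoint (SetRep s act X) v ↔ ∃ k, S k v)
    {Y : ℕ × ℕ → Fin m → A} :
    (∀ N, Viable i₀ S w n N Y) ↔
      IsChain s act X i₀ w Y ∧ Y (0, n) i₀ ≠ Y (w.length, n) i₀ := by
  simp only [IsChain, mem_iff_forall_survivesStage hZ hmono hS]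
  refine ⟨fun h => ⟨⟨fun j hj N => (h N).2.2 j hj,
      fun j hj t => (h (t + 1)).1 j hj t t.lt_succ_self⟩, (h (n + 1)).2.1 n.lt_succ_self⟩,
    fun ⟨⟨hmem, hlink⟩, hne⟩ N =>
      ⟨fun j hj t _ => hlink j hj t, fun _ => hne, fun j hj => hmem j hj N⟩⟩

end Viability

section Candidates
variable {β : Type*}

variable (β) in
noncomputable def chainCandidates [Fintype β] (k N : ℕ) : List (List (List β)) :=
  (List.replicate (k + 1)
    (List.replicate N (Finset.univ : Finset β).toList).sections).sections

def ofCandidate [Inhabited β] (p : List (List β)) : ℕ × ℕ → β :=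
  fun q => (p.getD q.1 []).getD q.2 default

def restrictChain (k N : ℕ) (Y : ℕ × ℕ → β) : List (List β) :=
  (List.range (k + 1)).map fun j => (List.range N).map fun t => Y (j, t)

theorem restrictChain_mem_chainCandidates [Fintype β] (k N : ℕ) (Y : ℕ × ℕ → β) :
    restrictChain k N Y ∈ chainCandidates β k N := by
  simp [restrictChain, chainCandidates, List.mem_sections_replicate]

theorem ofCandidate_restrictChain [Inhabited β] {k N j t : ℕ} (hj : j ≤ k) (ht : t < N)
    (Y : ℕ × ℕ → β) : ofCandidate (restrictChain k N Y) (j, t) = Y (j, t) := by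
  simp [ofCandidate, restrictChain, List.getD_eq_getElem?_getD, Nat.lt_succ_of_le hj, ht]

theorem primrec_chainCandidates [Primcodable β] [Fintype β] : Primrec₂ (chainCandidates β) :=
  Primrec.sections_replicate.comp
    (Primrec.sections_replicate.comp (Primrec.const _) Primrec.snd)
    (Primrec.succ.comp Primrec.fst)

theorem primrec_ofCandidate [Primcodable β] [Inhabited β] :
    Primrec₂ (ofCandidate : List (List β) → ℕ × ℕ → β) :=
  (Primrec.list_getD default).comp
    ((Primrec.list_getD []).comp Primrec.fst (Primrec.fst.comp Primrec.snd))
    (Primrec.snd.comp Primrec.snd)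

end Candidates

section Search
variable {A : Type*} {m : ℕ} {i₀ : Fin m} {S : ℕ → List (Fin m → A) → Prop}
  {w : List (Fin m)} {n N : ℕ}

theorem exists_viable_iff [Fintype A] [Inhabited A] :
    (∃ Y, Viable i₀ S w n N Y) ↔
      ∃ p ∈ chainCandidates (Fin m → A) w.length N, Viable i₀ S w n N (ofCandidate p) := by
  refine ⟨fun ⟨Y, hY⟩ => ⟨_, restrictChain_mem_chainCandidates _ _ Y, ?_⟩,
    fun ⟨p, _, hp⟩ => ⟨_, hp⟩⟩
  rwa [dependsOn_viable fun q hq => ?_]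
  obtain ⟨hj, ht⟩ := Finset.mem_product.1 hq
  exact ofCandidate_restrictChain (Nat.lt_succ_iff.1 (Finset.mem_range.1 hj))
    (Finset.mem_range.1 ht) Y

theorem exists_forall_viable [Finite A] [TopologicalSpace A] [DiscreteTopology A]
    (hmono : Monotone S) (h : ∀ N, ∃ Y, Viable i₀ S w n N Y) :
    ∃ Y, ∀ N, Viable i₀ S w n N Y := by
  have hclosed : ∀ N, IsClosed {Y | Viable i₀ S w n N Y} := fun N => by
    simpa using (dependsOn_viable.isLocallyConstant (Finset.finite_toSet _)).isClosed_fiber True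
  obtain ⟨Y, hY⟩ := IsCompact.nonempty_iInter_of_sequence_nonempty_isCompact_isClosed
    (fun N => {Y | Viable i₀ S w n N Y}) (fun N _ hY => hY.of_succ hmono) h
    (hclosed 0).isCompact hclosed
  exact ⟨Y, Set.mem_iInter.1 hY⟩

open Primrec in
theorem primrecPred_viable [Primcodable A] [DecidableEq A] [Inhabited A] (hS : PrimrecRel S) :
    PrimrecPred fun q : (List (Fin m) × ℕ × ℕ) × List (List (Fin m → A)) =>
      Viable i₀ S q.1.1 q.1.2.1 q.1.2.2 (ofCandidate q.2) := by
  have hk : Primrec fun q : (List (Fin m) × ℕ × ℕ) × List (List (Fin m → A)) =>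
      q.1.1.length :=
    list_length.comp (fst.comp fst)
  have hn : Primrec fun q : (List (Fin m) × ℕ × ℕ) × List (List (Fin m → A)) => q.1.2.1 :=
    fst.comp (snd.comp fst)
  have hN : Primrec fun q : (List (Fin m) × ℕ × ℕ) × List (List (Fin m → A)) => q.1.2.2 :=
    snd.comp (snd.comp fst)
  have hY : Primrec₂ fun (q : (List (Fin m) × ℕ × ℕ) × List (List (Fin m → A)))
      (jt : ℕ × ℕ) => ofCandidate q.2 jt :=
    primrec_ofCandidate.comp (snd.comp fst) snd
  have hlinks := PrimrecPred.forall_lt_bound hk <| PrimrecPred.forall_lt_bound (hN.comp fst)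
    (Primrec.eq.comp
      (fin_app.comp (hY.comp (fst.comp fst) ((succ.comp (snd.comp fst)).pair snd))
        ((list_getD i₀).comp (fst.comp (fst.comp (fst.comp fst))) (snd.comp fst)))
      (fin_app.comp (hY.comp (fst.comp fst) ((snd.comp fst).pair snd)) (const i₀)))
  have hdisc := (nat_le.comp hN hn).or (Primrec.eq.comp
    (fin_app.comp (hY.comp Primrec.id ((const 0).pair hn)) (const i₀))
    (fin_app.comp (hY.comp Primrec.id (hk.pair hn)) (const i₀))).not
  have hsurvive := PrimrecPred.forall_le_bound hk <| PrimrecPred.forall_le_bound (hN.comp fst)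
    (hS.comp (hN.comp (fst.comp fst))
      (list_map (list_range.comp snd)
        (hY.comp (fst.comp (fst.comp fst)) ((snd.comp (fst.comp fst)).pair snd)).to₂)).not
  exact (hlinks.and (hdisc.and hsurvive)).of_eq fun q => by
    simp only [Viable, SurvivesStage, id, Nat.succ_eq_add_one, imp_iff_not_or, not_lt, ne_eq]

end Search

theorem ne_one_iff_exists_apply_ne {G A : Type*} [Group G] {act : G → (ℕ → A) → ℕ → A}
    {X : Set (ℕ → A)} (h1 : ∀ x ∈ X, act 1 x = x)
    (hfaith : ∀ g : G, (∀ x ∈ X, act g x = x) → g = 1) {g : G} :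
    g ≠ 1 ↔ ∃ n, ∃ x ∈ X, act g x n ≠ x n := by
  refine ⟨fun hg => ?_, fun ⟨n, x, hx, hne⟩ hg => hne (by rw [hg, h1 x hx])⟩
  by_contra! h
  exact hg (hfaith g fun x hx => funext fun n => h n x hx)

/-- If a group generated by a finite set `S ∋ 1` admits a faithful effectively
closed action on a closed subset of `{0,1}^ℕ`, then its word problem is in `Π⁰₂`. -/
theorem wordProblem_pi02_of_faithful_effClosed
    (G : Type*) [Group G] {m : ℕ} (s : Fin m → G)
    (X : Set (ℕ → Bool)) (act : G → (ℕ → Bool) → ℕ → Bool)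
    (heff : IsEffClosedActionWith s act X)
    (hfaith : ∀ g : G, (∀ x ∈ X, act g x = x) → g = 1) :
    ∃ R : List (Fin m) → ℕ → ℕ → Prop,
      ComputablePred (fun t : List (Fin m) × ℕ × ℕ => R t.1 t.2.1 t.2.2) ∧
      ∀ w : List (Fin m), (w.map s).prod = 1 ↔ ∀ a : ℕ, ∃ b : ℕ, R w a b := by
  obtain ⟨-, hact, ⟨i₀, hi₀⟩, -, hYcl, hYre⟩ := heff
  obtain ⟨S, hSrec, hSmono, hS⟩ := hYre.exists_monotone_primrec_stages
  refine ⟨fun w n N => ∀ p ∈ chainCandidates (Fin m → Bool) w.length N,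
      ¬ Viable i₀ S w n N (ofCandidate p),
    ((primrecPred_viable hSrec).not.forall_mem_list_of (primrec_chainCandidates.comp
      (Primrec.list_length.comp Primrec.fst) (Primrec.snd.comp Primrec.snd))).computablePred,
    fun w => ?_⟩
  rw [← not_iff_not]
  push Not
  calc (w.map s).prod ≠ 1 ↔ ∃ n, ∃ x ∈ X, act (w.map s).prod x n ≠ x n :=
        ne_one_iff_exists_apply_ne hact.2.1 hfaith
    _ ↔ ∃ n, ∃ Y, IsChain s act X i₀ w Y ∧ Y (0, n) i₀ ≠ Y (w.length, n) i₀ := by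
        simp only [exists_isChain_ne_iff hact hi₀]
    _ ↔ ∃ n, ∃ Y, ∀ N, Viable i₀ S w n N Y := by
        simp only [forall_viable_iff hYcl hSmono hS]
    _ ↔ ∃ n, ∀ N, ∃ Y, Viable i₀ S w n N Y :=
        exists_congr fun n => ⟨fun ⟨Y, hY⟩ N => ⟨Y, hY N⟩, exists_forall_viable hSmono⟩
    _ ↔ _ := by simp only [exists_viable_iff]

end SelfSim
end
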